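/- arXiv:2406.04850 — 3 statements merged into one kernel-verified Lean document; each statement's English description precedes it below -/
import Mathlib

section
/- Let γ₁, γ₂, γ₃ be independent standard real Gaussian random variables and let a > 1. Then E[(γ₁² + γ₂² + (1/a²)γ₃²)/(γ₁² + γ₂² + (1/a)γ₃²)] = 1 + (1/a) − (1/a)·(1/(2√(1−1/a)))·log((1+√(1−1/a))/(1−√(1−1/a))). -/
/-!
Write `b = 1/a` and `S = γ₁² + γ₂² + b γ₃²`. The integrand equals `1 + (b² - b) γ₃² / S`, and
`1/S = ∫₀^∞ e^{-tS} dt`. By Fubini and independence, `E[γ₃² e^{-tS}]` factors into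
one-dimensional Gaussian integrals, which are computed by exponential tilting:
`E[γ₃² e^{-tS}] = (1 + 2t)⁻¹ (1 + 2bt)^{-3/2}`. With `k = √(1 - b)` and `u = √(1 + 2bt)`
this is `k⁻² d/dt [u⁻¹ + (2k)⁻¹ log ((u - k)/(u + k))]`, which gives the logarithm.
-/

open MeasureTheory ProbabilityTheory Real Set Filter Topology
open scoped NNReal

lemma integral_div_eq_integral_Ioi_integral_mul_exp {Ω : Type*} [MeasurableSpace Ω]
    {μ : Measure Ω} [SFinite μ] {X S : Ω → ℝ} (hX : Measurable X) (hS : Measurable S)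
    (hX0 : ∀ ω, 0 ≤ X ω) (hS0 : ∀ᵐ ω ∂μ, 0 < S ω) (hint : Integrable (fun ω => X ω / S ω) μ) :
    ∫ ω, X ω / S ω ∂μ = ∫ t in Ioi 0, ∫ ω, X ω * exp (-S ω * t) ∂μ := by
  have hlaplace : ∀ᵐ ω ∂μ, ∫ t in Ioi 0, X ω * exp (-S ω * t) = X ω / S ω := by
    filter_upwards [hS0] with ω hω
    rw [integral_const_mul, integral_exp_mul_Ioi (neg_lt_zero.2 hω)]
    simp [div_eq_mul_inv]
  have hF : Integrable (Function.uncurry fun ω t => X ω * exp (-S ω * t))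
      (μ.prod (volume.restrict (Ioi 0))) := by
    refine (integrable_prod_iff ?_).2 ⟨?_, ?_⟩
    · exact Measurable.aestronglyMeasurable (by fun_prop)
    · filter_upwards [hS0] with ω hω
      exact (exp_neg_integrableOn_Ioi 0 hω).const_mul (X ω)
    · refine hint.congr ?_
      filter_upwards [hlaplace] with ω hω
      simp_rw [Function.uncurry_apply_pair, Real.norm_eq_abs, abs_mul, abs_of_nonneg (hX0 ω),
        Real.abs_exp, hω]
  rw [← integral_congr_ae hlaplace]
  exact integral_integral_swap hF

lemma integral_sq_centered_gaussianReal (v : ℝ≥0) : ∫ x, x ^ 2 ∂gaussianReal 0 v = v := by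
  simpa [variance_eq_integral measurable_id'.aemeasurable, integral_id_gaussianReal]
    using variance_fun_id_gaussianReal (μ := 0) (v := v)

lemma integral_mul_exp_neg_mul_sq_gaussianReal (g : ℝ → ℝ) {c : ℝ} (hc : 0 < 1 + 2 * c) :
    ∫ x, g x * exp (-c * x ^ 2) ∂gaussianReal 0 1
      = (√(1 + 2 * c))⁻¹ * ∫ x, g x ∂gaussianReal 0 (1 + 2 * c)⁻¹.toNNReal := by
  have hv : (1 + 2 * c)⁻¹.toNNReal ≠ 0 := by simpa using hc
  rw [integral_gaussianReal_eq_integral_smul one_ne_zero,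
    integral_gaussianReal_eq_integral_smul hv, ← integral_const_mul]
  congr 1 with x
  simp only [gaussianPDFReal, Real.coe_toNNReal _ (inv_nonneg.2 hc.le), smul_eq_mul,
    NNReal.coe_one, mul_one, sub_zero]
  have hsqrt : √(2 * π) = √(1 + 2 * c) * √(2 * π * (1 + 2 * c)⁻¹) := by
    rw [← sqrt_mul hc.le]; congr 1; field_simp
  have hexp : exp (-x ^ 2 / 2) * exp (-c * x ^ 2) = exp (-x ^ 2 / (2 * (1 + 2 * c)⁻¹)) := by
    rw [← exp_add]; congr 1; field_simp; ring
  rw [hsqrt, mul_inv, ← hexp]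
  ring

lemma integral_exp_neg_mul_sq_gaussianReal {c : ℝ} (hc : 0 < 1 + 2 * c) :
    ∫ x, exp (-c * x ^ 2) ∂gaussianReal 0 1 = (√(1 + 2 * c))⁻¹ := by
  simpa using integral_mul_exp_neg_mul_sq_gaussianReal (fun _ => 1) hc

lemma integral_sq_mul_exp_neg_mul_sq_gaussianReal {c : ℝ} (hc : 0 < 1 + 2 * c) :
    ∫ x, x ^ 2 * exp (-c * x ^ 2) ∂gaussianReal 0 1 = (√(1 + 2 * c))⁻¹ * (1 + 2 * c)⁻¹ := by
  rw [integral_mul_exp_neg_mul_sq_gaussianReal (· ^ 2) hc, integral_sq_centered_gaussianReal,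
    Real.coe_toNNReal _ (inv_nonneg.2 hc.le)]

lemma integral_sq_mul_exp_neg_mul_gaussian_pi {b t : ℝ} (hb : 0 ≤ b) (ht : 0 ≤ t) :
    ∫ γ : Fin 3 → ℝ, γ 2 ^ 2 * exp (-(γ 0 ^ 2 + γ 1 ^ 2 + b * γ 2 ^ 2) * t)
        ∂(Measure.pi fun _ => gaussianReal 0 1)
      = (1 + 2 * t)⁻¹ * ((1 + 2 * (b * t))⁻¹ * (√(1 + 2 * (b * t)))⁻¹) := by
  have hfactor : ∀ γ : Fin 3 → ℝ, γ 2 ^ 2 * exp (-(γ 0 ^ 2 + γ 1 ^ 2 + b * γ 2 ^ 2) * t)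
      = ∏ i, ![fun x => exp (-t * x ^ 2), fun x => exp (-t * x ^ 2),
          fun x => x ^ 2 * exp (-(b * t) * x ^ 2)] i (γ i) := by
    intro γ
    simp only [Fin.prod_univ_three, Matrix.cons_val_zero, Matrix.cons_val_one, Matrix.cons_val_two,
      Matrix.head_cons, Matrix.tail_cons]
    rw [mul_left_comm, ← exp_add, ← exp_add]
    ring_nf
  have ht' : 0 < 1 + 2 * t := by linarith
  have hbt : 0 < 1 + 2 * (b * t) := by nlinarith [mul_nonneg hb ht]
  simp_rw [hfactor]
  rw [integral_fintype_prod_eq_prod, Fin.prod_univ_three]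
  simp only [Matrix.cons_val_zero, Matrix.cons_val_one, Matrix.cons_val_two,
      Matrix.head_cons, Matrix.tail_cons]
  rw [integral_exp_neg_mul_sq_gaussianReal ht', integral_sq_mul_exp_neg_mul_sq_gaussianReal hbt,
    ← mul_inv, mul_self_sqrt ht'.le]
  ring

lemma ae_pos_sq_add_sq_add_mul_sq_gaussian_pi {b : ℝ} (hb : 0 ≤ b) :
    ∀ᵐ γ ∂(Measure.pi fun _ : Fin 3 => gaussianReal 0 1), 0 < γ 0 ^ 2 + γ 1 ^ 2 + b * γ 2 ^ 2 := by
  have hne : ∀ᵐ γ ∂(Measure.pi fun _ : Fin 3 => gaussianReal 0 1), γ 0 ≠ 0 := by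
    refine (measurePreserving_eval _ 0).quasiMeasurePreserving.ae (p := (· ≠ 0)) ?_
    exact compl_mem_ae_iff.2 ((gaussianReal_absolutelyContinuous 0 one_ne_zero) volume_singleton)
  filter_upwards [hne] with γ hγ
  positivity

lemma integrable_sq_div_sq_add_sq_add_mul_sq {μ : Measure (Fin 3 → ℝ)} [IsFiniteMeasure μ]
    {b : ℝ} (hb : 0 < b) :
    Integrable (fun γ : Fin 3 → ℝ => γ 2 ^ 2 / (γ 0 ^ 2 + γ 1 ^ 2 + b * γ 2 ^ 2)) μ := by
  refine Integrable.of_bound (C := b⁻¹) (Measurable.aestronglyMeasurable (by fun_prop)) ?_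
  refine ae_of_all _ fun γ => ?_
  rw [Real.norm_of_nonneg (by positivity)]
  refine div_le_of_le_mul₀ (by positivity) (by positivity) ?_
  rw [mul_add, ← mul_assoc, inv_mul_cancel₀ hb.ne', one_mul]
  exact le_add_of_nonneg_left (by positivity)

lemma hasDerivAt_inv_add_log_sub_log {k u : ℝ} (hk : 0 < k) (hu : k < u) :
    HasDerivAt (fun u => u⁻¹ + (2 * k)⁻¹ * (log (u - k) - log (u + k)))
      (k ^ 2 / (u ^ 2 * (u ^ 2 - k ^ 2))) u := by
  have hsub : u - k ≠ 0 := by linarith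
  have hadd : u + k ≠ 0 := by linarith
  have h := (hasDerivAt_inv (by linarith : u ≠ 0)).add
    ((((hasDerivAt_id u).sub_const k).log hsub).sub (((hasDerivAt_id u).add_const k).log hadd)
      |>.const_mul (2 * k)⁻¹)
  refine h.congr_deriv ?_
  have : u ^ 2 - k ^ 2 = (u - k) * (u + k) := by ring
  have hu0 : u ≠ 0 := by linarith
  rw [this, id]
  field_simp
  ring

lemma tendsto_inv_add_log_sub_log_atTop (k : ℝ) :
    Tendsto (fun u => u⁻¹ + (2 * k)⁻¹ * (log (u - k) - log (u + k))) atTop (𝓝 0) := by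
  have hratio : Tendsto (fun u => (u - k) / (u + k)) atTop (𝓝 1) := by
    have hinv := tendsto_inv_atTop_zero.const_mul k
    have h := ((tendsto_const_nhds (x := (1 : ℝ))).sub hinv).div (tendsto_const_nhds.add hinv)
      (by simp : (1 : ℝ) + k * 0 ≠ 0)
    simp only [mul_zero, sub_zero, add_zero, div_one] at h
    refine h.congr' ?_
    filter_upwards [eventually_gt_atTop 0] with u hu
    simp only [Pi.div_apply]
    field_simp
  have hlog : Tendsto (fun u => log (u - k) - log (u + k)) atTop (𝓝 0) := by
    have := ((continuousAt_log one_ne_zero).tendsto.comp hratio)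
    rw [log_one] at this
    refine this.congr' ?_
    filter_upwards [eventually_gt_atTop |k|] with u hu
    exact log_div (by linarith [neg_abs_le k, le_abs_self k]) (by linarith [neg_abs_le k])
  simpa using tendsto_inv_atTop_zero.add (hlog.const_mul (2 * k)⁻¹)

lemma integral_Ioi_inv_mul_inv_mul_inv_sqrt {k : ℝ} (hk0 : 0 < k) (hk1 : k < 1) :
    ∫ t in Ioi 0,
        (1 + 2 * t)⁻¹ * ((1 + 2 * ((1 - k ^ 2) * t))⁻¹ * (√(1 + 2 * ((1 - k ^ 2) * t)))⁻¹)
      = ((2 * k)⁻¹ * log ((1 + k) / (1 - k)) - 1) / k ^ 2 := by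
  set b := 1 - k ^ 2 with hb
  have hb0 : 0 < b := by nlinarith
  set H := fun u => u⁻¹ + (2 * k)⁻¹ * (log (u - k) - log (u + k)) with hH
  set u := fun t : ℝ => √(1 + 2 * (b * t)) with hu
  have hderiv : ∀ t ∈ Ici (0 : ℝ), HasDerivAt (fun t => H (u t) / k ^ 2)
      ((1 + 2 * t)⁻¹ * ((1 + 2 * (b * t))⁻¹ * (√(1 + 2 * (b * t)))⁻¹)) t := by
    intro t ht
    have ht : 0 ≤ t := ht
    have hpos : 0 < 1 + 2 * (b * t) := by positivity
    have hu1 : 1 ≤ u t := by simp only [hu]; exact one_le_sqrt.2 (by nlinarith)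
    have hsq : u t ^ 2 = 1 + 2 * (b * t) := sq_sqrt hpos.le
    have hinner : HasDerivAt u (2 * b / (2 * u t)) t :=
      (((hasDerivAt_id t).const_mul b).const_mul 2 |>.const_add 1 |>.sqrt hpos.ne').congr_deriv
        (by simp [hu])
    have h := ((hasDerivAt_inv_add_log_sub_log hk0 (by linarith)).comp t hinner).div_const (k ^ 2)
    have hdiff : u t ^ 2 - k ^ 2 = b * (1 + 2 * t) := by rw [hsq, hb]; ring
    refine h.congr_deriv ?_
    rw [show √(1 + 2 * (b * t)) = u t from rfl, ← hsq, hdiff]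
    have : u t ≠ 0 := by linarith
    field_simp
  have hlim : Tendsto (fun t => H (u t) / k ^ 2) atTop (𝓝 0) := by
    have hu_top : Tendsto u atTop atTop :=
      tendsto_sqrt_atTop.comp <| tendsto_atTop_add_const_left _ 1 <|
        (tendsto_id.const_mul_atTop hb0).const_mul_atTop two_pos
    have := ((tendsto_inv_add_log_sub_log_atTop k).comp hu_top).div_const (k ^ 2)
    rwa [zero_div] at this
  rw [integral_Ioi_of_hasDerivAt_of_nonneg' hderiv (fun t (ht : 0 < t) => by positivity) hlim,
    log_div (by linarith) (by linarith)]
  simp only [hH, hu, mul_zero, add_zero, sqrt_one, inv_one]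
  ring

lemma integral_sq_div_sq_add_sq_add_mul_sq_gaussian_pi {b : ℝ} (hb0 : 0 < b) (hb1 : b < 1) :
    ∫ γ : Fin 3 → ℝ, γ 2 ^ 2 / (γ 0 ^ 2 + γ 1 ^ 2 + b * γ 2 ^ 2)
        ∂(Measure.pi fun _ => gaussianReal 0 1)
      = ((2 * √(1 - b))⁻¹ * log ((1 + √(1 - b)) / (1 - √(1 - b))) - 1) / (1 - b) := by
  rw [integral_div_eq_integral_Ioi_integral_mul_exp (by fun_prop) (by fun_prop)
    (fun _ => sq_nonneg _) (ae_pos_sq_add_sq_add_mul_sq_gaussian_pi hb0.le)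
    (integrable_sq_div_sq_add_sq_add_mul_sq hb0),
    setIntegral_congr_fun measurableSet_Ioi
      fun t ht => integral_sq_mul_exp_neg_mul_gaussian_pi hb0.le (le_of_lt ht)]
  set k := √(1 - b) with hk
  have hk0 : 0 < k := sqrt_pos.2 (by linarith)
  have hk2 : k ^ 2 = 1 - b := sq_sqrt (by linarith)
  have hk1 : k < 1 := by nlinarith
  rw [← hk2, show b = 1 - k ^ 2 by linarith]
  exact integral_Ioi_inv_mul_inv_mul_inv_sqrt hk0 hk1

/-- For independent standard Gaussians γ₁,γ₂,γ₃ and `a > 1`,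
`E[(γ₁²+γ₂²+(1/a²)γ₃²)/(γ₁²+γ₂²+(1/a)γ₃²)]
  = 1 + 1/a − (1/a)·(1/(2√(1−1/a)))·log((1+√(1−1/a))/(1−√(1−1/a)))`. -/
theorem stmt0 (a : ℝ) (ha : 1 < a) :
    ∫ γ : Fin 3 → ℝ,
        (γ 0 ^ 2 + γ 1 ^ 2 + (1 / a ^ 2) * γ 2 ^ 2) /
          (γ 0 ^ 2 + γ 1 ^ 2 + (1 / a) * γ 2 ^ 2)
        ∂(Measure.pi fun _ => gaussianReal 0 1)
      = 1 + 1 / a - (1 / a) * (1 / (2 * Real.sqrt (1 - 1 / a))) *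
          Real.log ((1 + Real.sqrt (1 - 1 / a)) / (1 - Real.sqrt (1 - 1 / a))) := by
  have hb0 : 0 < 1 / a := by positivity
  have hb1 : 1 / a < 1 := (div_lt_one (by linarith)).2 ha
  have hsplit : ∀ᵐ γ ∂(Measure.pi fun _ : Fin 3 => gaussianReal 0 1),
      (γ 0 ^ 2 + γ 1 ^ 2 + (1 / a ^ 2) * γ 2 ^ 2) / (γ 0 ^ 2 + γ 1 ^ 2 + (1 / a) * γ 2 ^ 2)
        = 1 + ((1 / a) ^ 2 - 1 / a) * (γ 2 ^ 2 / (γ 0 ^ 2 + γ 1 ^ 2 + (1 / a) * γ 2 ^ 2)) := by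
    filter_upwards [ae_pos_sq_add_sq_add_mul_sq_gaussian_pi hb0.le] with γ hγ
    rw [eq_comm, mul_div_assoc', one_add_div hγ.ne']
    ring
  rw [integral_congr_ae hsplit, integral_add (integrable_const _)
    ((integrable_sq_div_sq_add_sq_add_mul_sq hb0).const_mul _), integral_const_mul,
    integral_sq_div_sq_add_sq_add_mul_sq_gaussian_pi hb0 hb1]
  simp only [integral_const, probReal_univ, smul_eq_mul, one_mul]
  generalize 1 / a = b at hb0 hb1 ⊢
  have hk0 : 0 < √(1 - b) := sqrt_pos.2 (by linarith)
  generalize log ((1 + √(1 - b)) / (1 - √(1 - b))) = L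
  have : 1 - b ≠ 0 := by linarith
  field_simp
  ring
end

section
/- Let γ₁, γ₂, γ₃ be independent standard real Gaussian random variables and let a > 1. Then E[√(γ₁² + γ₂² + (1/a)γ₃²)] = √(2/π)·(1/√a + arcsin(√(1−1/a))/√(1−1/a)). -/
/-!
Polar coordinates for the standard Gaussian on the plane give, for radial integrands,
`E g(γ₁² + γ₂²) = ∫₀^∞ r e^{-r²/2} g(r²) dr = √(π/2) E[|γ₂| g(γ₂²)]`. Applied for fixed `γ₃`, this
reduces the expectation to `√(π/2) E[|γ₂| √(γ₂² + γ₃²/a)]`. That integrand is homogeneous of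
degree 2 in `(γ₃, γ₂)`, so polar coordinates split it into `∫₀^∞ r³ e^{-r²/2} dr = 2` times an
angular integral, which `u = cos θ` turns into `∫_{-1}^{1} √(1 - (1 - 1/a) u²) du`, computed by an
explicit antiderivative involving `arcsin`.
-/

open MeasureTheory ProbabilityTheory Real Set

lemma gaussianPDFReal_zero_one (x : ℝ) :
    gaussianPDFReal 0 1 x = (√(2 * π))⁻¹ * exp (-x ^ 2 / 2) := by
  simp [gaussianPDFReal]

lemma integral_gaussianReal_prod_polar {E : Type*} [NormedAddCommGroup E] [NormedSpace ℝ E]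
    (f : ℝ × ℝ → E) :
    ∫ p, f p ∂(gaussianReal 0 1).prod (gaussianReal 0 1)
      = (2 * π)⁻¹ • ∫ q in polarCoord.target, (q.1 * exp (-q.1 ^ 2 / 2)) • f (polarCoord.symm q) := by
  rw [gaussianReal_of_var_ne_zero 0 one_ne_zero,
    prod_withDensity (measurable_gaussianPDF 0 1) (measurable_gaussianPDF 0 1),
    ← Measure.volume_eq_prod, integral_withDensity_eq_integral_toReal_smul (by fun_prop)
      (ae_of_all _ fun _ => ENNReal.mul_lt_top gaussianPDF_lt_top gaussianPDF_lt_top),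
    ← integral_comp_polarCoord_symm, ← integral_smul]
  refine setIntegral_congr_fun polarCoord.open_target.measurableSet fun q _ => ?_
  obtain ⟨r, θ⟩ := q
  have hexp : exp (-(r * cos θ) ^ 2 / 2) * exp (-(r * sin θ) ^ 2 / 2) = exp (-r ^ 2 / 2) := by
    rw [← exp_add]; congr 1; linear_combination (-r ^ 2 / 2) * sin_sq_add_cos_sq θ
  simp only [polarCoord_symm_apply, gaussianPDF, ENNReal.toReal_mul,
    ENNReal.toReal_ofReal (gaussianPDFReal_nonneg _ _ _), smul_smul]
  congr 1
  simp only [gaussianPDFReal_zero_one]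
  rw [mul_mul_mul_comm, hexp, ← mul_inv, mul_self_sqrt (by positivity)]
  ring

lemma integral_gaussianReal_prod_radial (g : ℝ → ℝ) :
    ∫ p, g (p.1 ^ 2 + p.2 ^ 2) ∂(gaussianReal 0 1).prod (gaussianReal 0 1)
      = ∫ r in Ioi 0, r * exp (-r ^ 2 / 2) * g (r ^ 2) := by
  rw [integral_gaussianReal_prod_polar, polarCoord_target,
    setIntegral_congr_fun (measurableSet_Ioi.prod measurableSet_Ioo)
      (g := fun q => (q.1 * exp (-q.1 ^ 2 / 2) * g (q.1 ^ 2)) * 1) fun q _ => ?_,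
    Measure.volume_eq_prod,
    setIntegral_prod_mul (fun r => r * exp (-r ^ 2 / 2) * g (r ^ 2)) (fun _ => (1 : ℝ))]
  · rw [integral_const, measureReal_restrict_apply_univ,
      volume_real_Ioo_of_le (by linarith [pi_pos]), smul_eq_mul, smul_eq_mul]
    field_simp
    ring
  · simp only [polarCoord_symm_apply, smul_eq_mul, mul_pow]
    rw [← mul_add, cos_sq_add_sin_sq, mul_one, mul_one]

lemma integral_gaussianReal_prod_radial_eq_integral_abs (g : ℝ → ℝ) :
    ∫ p, g (p.1 ^ 2 + p.2 ^ 2) ∂(gaussianReal 0 1).prod (gaussianReal 0 1)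
      = √(π / 2) * ∫ y, |y| * g (y ^ 2) ∂gaussianReal 0 1 := by
  have hsqrt : √(2 * π) = 2 * √(π / 2) := by
    rw [show 2 * π = 2 ^ 2 * (π / 2) by ring, sqrt_mul (by positivity), sqrt_sq zero_le_two]
  have heven (y : ℝ) : gaussianPDFReal 0 1 y • (|y| * g (y ^ 2))
      = (√(2 * π))⁻¹ * (|y| * exp (-|y| ^ 2 / 2) * g (|y| ^ 2)) := by
    rw [gaussianPDFReal_zero_one, sq_abs, smul_eq_mul]; ring
  simp_rw [integral_gaussianReal_prod_radial, integral_gaussianReal_eq_integral_smul one_ne_zero,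
    heven]
  rw [integral_comp_abs (f := fun t => (√(2 * π))⁻¹ * (t * exp (-t ^ 2 / 2) * g (t ^ 2))),
    integral_const_mul, hsqrt]
  field_simp

lemma integral_Ioi_pow_three_mul_exp_neg_sq_div_two :
    ∫ r in Ioi (0 : ℝ), r ^ 3 * exp (-r ^ 2 / 2) = 2 := by
  have h := integral_rpow_mul_exp_neg_mul_rpow (p := 2) (q := 3) (b := 1 / 2)
    (by norm_num) (by norm_num) (by norm_num)
  norm_num at h
  simpa only [neg_div, div_eq_inv_mul, one_div, neg_mul_eq_mul_neg, mul_one] using h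

lemma integral_gaussianReal_prod_of_homogeneous {f : ℝ × ℝ → ℝ}
    (hf : ∀ r > 0, ∀ p, f (r • p) = r ^ 2 * f p) :
    ∫ p, f p ∂(gaussianReal 0 1).prod (gaussianReal 0 1)
      = π⁻¹ * ∫ θ in Ioo (-π) π, f (cos θ, sin θ) := by
  rw [integral_gaussianReal_prod_polar, polarCoord_target,
    setIntegral_congr_fun (measurableSet_Ioi.prod measurableSet_Ioo)
      (g := fun q => (q.1 ^ 3 * exp (-q.1 ^ 2 / 2)) * f (cos q.2, sin q.2)) fun q hq => ?_,
    Measure.volume_eq_prod,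
    setIntegral_prod_mul (fun r => r ^ 3 * exp (-r ^ 2 / 2)) (fun θ => f (cos θ, sin θ)),
    integral_Ioi_pow_three_mul_exp_neg_sq_div_two]
  · rw [smul_eq_mul]
    field_simp
  · obtain ⟨r, θ⟩ := q
    have : (r * cos θ, r * sin θ) = r • (cos θ, sin θ) := by simp
    simp only [polarCoord_symm_apply, smul_eq_mul, this, hf r hq.1]
    ring

lemma integral_sqrt_one_sub_mul_sq {k : ℝ} (hk0 : 0 < k) (hk1 : k ≤ 1) :
    ∫ u in (-1)..1, √(1 - k * u ^ 2) = √(1 - k) + arcsin √k / √k := by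
  have hderiv : ∀ u ∈ Ioo (-1 : ℝ) 1, HasDerivAt
      (fun u => (u * √(1 - k * u ^ 2) + arcsin (√k * u) / √k) / 2) (√(1 - k * u ^ 2)) u := by
    intro u ⟨hu₁, hu₂⟩
    have hku : (√k * u) ^ 2 = k * u ^ 2 := by rw [mul_pow, sq_sqrt hk0.le]
    have hlt : k * u ^ 2 < 1 := by nlinarith
    have hpos : 0 < 1 - k * u ^ 2 := by linarith
    have hne₁ : √k * u ≠ -1 := fun h => by nlinarith
    have hne₂ : √k * u ≠ 1 := fun h => by nlinarith
    have h1 := (hasDerivAt_id' u).mul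
      ((((hasDerivAt_pow 2 u).const_mul k).const_sub 1).sqrt hpos.ne')
    have h2 := (hasDerivAt_arcsin hne₁ hne₂).comp u ((hasDerivAt_id u).const_mul √k)
    refine ((h1.add (h2.div_const √k)).div_const 2).congr_deriv ?_
    rw [hku]
    field_simp
    rw [sq_sqrt hpos.le]
    ring
  rw [intervalIntegral.integral_eq_sub_of_hasDerivAt_of_le (by norm_num) (by fun_prop) hderiv
    (Continuous.intervalIntegrable (by fun_prop) _ _)]
  simp only [one_pow, mul_one, one_mul, even_two, Even.neg_pow, neg_mul, mul_neg, arcsin_neg]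
  ring

lemma integral_Ioo_neg_pi_pi_abs_sin_mul_comp_cos {G : ℝ → ℝ} (hG : Continuous G) :
    ∫ θ in Ioo (-π) π, |sin θ| * G (cos θ) = 2 * ∫ u in (-1)..1, G u := by
  have hcont : Continuous fun θ => |sin θ| * G (cos θ) := by fun_prop
  have hhalf : ∫ θ in (0)..π, |sin θ| * G (cos θ) = ∫ u in (-1)..1, G u := by
    have hsub := intervalIntegral.integral_comp_mul_deriv (a := 0) (b := π)
      (fun θ _ => hasDerivAt_cos θ) (by fun_prop) hG
    rw [cos_zero, cos_pi] at hsub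
    rw [intervalIntegral.integral_symm 1 (-1), ← hsub, ← intervalIntegral.integral_neg]
    refine intervalIntegral.integral_congr fun θ hθ => ?_
    rw [uIcc_of_le pi_pos.le] at hθ
    simp only [Function.comp, abs_of_nonneg (sin_nonneg_of_nonneg_of_le_pi hθ.1 hθ.2)]
    ring
  have hneg : ∫ θ in (-π)..0, |sin θ| * G (cos θ) = ∫ θ in (0)..π, |sin θ| * G (cos θ) := by
    simpa [sin_neg, cos_neg] using
      (intervalIntegral.integral_comp_neg (a := 0) (b := π) fun θ => |sin θ| * G (cos θ)).symm
  rw [← integral_Ioc_eq_integral_Ioo, ← intervalIntegral.integral_of_le (by linarith [pi_pos]),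
    ← intervalIntegral.integral_add_adjacent_intervals (b := 0) (hcont.intervalIntegrable _ _)
      (hcont.intervalIntegrable _ _), hneg, hhalf]
  ring

lemma integral_pi_fin_three {α E : Type*} [MeasurableSpace α] [NormedAddCommGroup E]
    [NormedSpace ℝ E] (μ : Measure α) [SigmaFinite μ] (g : α → α → α → E) :
    ∫ x : Fin 3 → α, g (x 0) (x 1) (x 2) ∂Measure.pi (fun _ => μ)
      = ∫ q, g q.2.1 q.2.2 q.1 ∂μ.prod (μ.prod μ) := by
  rw [← ((MeasurePreserving.id μ).prod (measurePreserving_piFinTwo fun _ => μ)).integral_comp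
      (MeasurableEmbedding.id.prodMap (MeasurableEquiv.piFinTwo _).measurableEmbedding),
    ← (measurePreserving_piFinSuccAbove (fun _ => μ) 2).integral_comp']
  rfl

lemma integrable_sq_gaussianReal (μ : ℝ) (v : NNReal) :
    Integrable (fun x : ℝ => x ^ 2) (gaussianReal μ v) :=
  (memLp_id_gaussianReal' 2 (by simp)).integrable_sq

lemma integrable_sqrt_sq_add_sq_add_mul_sq {c : ℝ} (hc : 0 ≤ c) :
    Integrable (fun q : ℝ × ℝ × ℝ => √(q.2.1 ^ 2 + q.2.2 ^ 2 + c * q.1 ^ 2))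
      ((gaussianReal 0 1).prod ((gaussianReal 0 1).prod (gaussianReal 0 1))) := by
  have h := integrable_sq_gaussianReal 0 1
  have hbound : Integrable (fun q : ℝ × ℝ × ℝ => 1 + (q.2.1 ^ 2 + q.2.2 ^ 2 + c * q.1 ^ 2))
      ((gaussianReal 0 1).prod ((gaussianReal 0 1).prod (gaussianReal 0 1))) :=
    (integrable_const 1).add ((((h.comp_fst _).comp_snd _).add ((h.comp_snd _).comp_snd _)).add
      ((h.comp_fst _).const_mul c))
  refine hbound.mono' (by fun_prop) (ae_of_all _ fun q => ?_)
  have hs : 0 ≤ q.2.1 ^ 2 + q.2.2 ^ 2 + c * q.1 ^ 2 := by positivity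
  rw [norm_of_nonneg (sqrt_nonneg _)]
  nlinarith [sq_sqrt hs, sq_nonneg (√(q.2.1 ^ 2 + q.2.2 ^ 2 + c * q.1 ^ 2) - 1)]

lemma integrable_abs_mul_sqrt_sq_add_mul_sq {c : ℝ} (hc : 0 ≤ c) :
    Integrable (fun p : ℝ × ℝ => |p.2| * √(p.2 ^ 2 + c * p.1 ^ 2))
      ((gaussianReal 0 1).prod (gaussianReal 0 1)) := by
  have h := integrable_sq_gaussianReal 0 1
  have hbound : Integrable (fun p : ℝ × ℝ => p.2 ^ 2 + (p.2 ^ 2 + c * p.1 ^ 2))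
      ((gaussianReal 0 1).prod (gaussianReal 0 1)) :=
    (h.comp_snd _).add ((h.comp_snd _).add ((h.comp_fst _).const_mul c))
  refine hbound.mono' (by fun_prop) (ae_of_all _ fun p => ?_)
  have hs : 0 ≤ p.2 ^ 2 + c * p.1 ^ 2 := by positivity
  rw [norm_of_nonneg (by positivity)]
  nlinarith [sq_sqrt hs, sq_abs p.2, sq_nonneg (|p.2| - √(p.2 ^ 2 + c * p.1 ^ 2))]

lemma integral_sqrt_sq_add_sq_add_mul_sq {c : ℝ} (hc : 0 ≤ c) :
    ∫ q, √(q.2.1 ^ 2 + q.2.2 ^ 2 + c * q.1 ^ 2)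
        ∂(gaussianReal 0 1).prod ((gaussianReal 0 1).prod (gaussianReal 0 1))
      = √(π / 2) * ∫ p, |p.2| * √(p.2 ^ 2 + c * p.1 ^ 2)
        ∂(gaussianReal 0 1).prod (gaussianReal 0 1) := by
  rw [integral_prod _ (integrable_sqrt_sq_add_sq_add_mul_sq hc),
    integral_prod _ (integrable_abs_mul_sqrt_sq_add_mul_sq hc), ← integral_const_mul]
  congr with z
  exact integral_gaussianReal_prod_radial_eq_integral_abs fun t => √(t + c * z ^ 2)

lemma integral_abs_mul_sqrt_sq_add_mul_sq {c : ℝ} (hc0 : 0 ≤ c) (hc1 : c < 1) :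
    ∫ p, |p.2| * √(p.2 ^ 2 + c * p.1 ^ 2) ∂(gaussianReal 0 1).prod (gaussianReal 0 1)
      = 2 / π * (√c + arcsin √(1 - c) / √(1 - c)) := by
  have hhom (r : ℝ) (hr : r > 0) (p : ℝ × ℝ) :
      |(r • p).2| * √((r • p).2 ^ 2 + c * (r • p).1 ^ 2)
        = r ^ 2 * (|p.2| * √(p.2 ^ 2 + c * p.1 ^ 2)) := by
    rw [Prod.smul_fst, Prod.smul_snd, smul_eq_mul, smul_eq_mul, abs_mul, abs_of_pos hr,
      show (r * p.2) ^ 2 + c * (r * p.1) ^ 2 = r ^ 2 * (p.2 ^ 2 + c * p.1 ^ 2) by ring,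
      sqrt_mul (sq_nonneg r), sqrt_sq hr.le]
    ring
  have hcircle (θ : ℝ) : sin θ ^ 2 + c * cos θ ^ 2 = 1 - (1 - c) * cos θ ^ 2 := by
    linear_combination sin_sq_add_cos_sq θ
  rw [integral_gaussianReal_prod_of_homogeneous hhom]
  simp only [hcircle]
  rw [integral_Ioo_neg_pi_pi_abs_sin_mul_comp_cos (G := fun u => √(1 - (1 - c) * u ^ 2))
      (by fun_prop), integral_sqrt_one_sub_mul_sq (by linarith) (by linarith), sub_sub_cancel]
  ring

/-- For independent standard Gaussians γ₁,γ₂,γ₃ and `a > 1`,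
`E[√(γ₁²+γ₂²+(1/a)γ₃²)] = √(2/π)·(1/√a + arcsin(√(1−1/a))/√(1−1/a))`. -/
theorem stmt2 (a : ℝ) (ha : 1 < a) :
    ∫ γ : Fin 3 → ℝ,
        Real.sqrt (γ 0 ^ 2 + γ 1 ^ 2 + (1 / a) * γ 2 ^ 2)
        ∂(Measure.pi fun _ => gaussianReal 0 1)
      = Real.sqrt (2 / Real.pi) *
          (1 / Real.sqrt a + Real.arcsin (Real.sqrt (1 - 1 / a)) / Real.sqrt (1 - 1 / a)) := by
  have hc0 : 0 ≤ 1 / a := by positivity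
  have hc1 : 1 / a < 1 := (div_lt_one (by linarith)).2 ha
  have hsqrt_inv : √(1 / a) = 1 / √a := by rw [one_div, one_div, sqrt_inv]
  have hπ : √(π / 2) * (2 / π) = √(2 / π) := by
    rw [← inv_div 2 π, sqrt_inv]
    field_simp
    rw [sq_sqrt (by positivity)]
    field_simp
  rw [integral_pi_fin_three _ fun x y z => √(x ^ 2 + y ^ 2 + 1 / a * z ^ 2),
    integral_sqrt_sq_add_sq_add_mul_sq hc0, integral_abs_mul_sqrt_sq_add_mul_sq hc0 hc1,
    hsqrt_inv, ← hπ]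
  ring
end

section
/- Let α(φ, θ) = cos²(θ/2)·e^{−iφ/2} + sin²(θ/2)·e^{iφ/2} and let s ∈ ℤ. Then the function φ ↦ (α(φ,θ)²/|α(φ,θ)|²)^s satisfies: its first derivative at φ = 0 equals −is·cos θ and its second derivative at φ = 0 equals −s²·cos²θ. -/
/-!
Since `α(-φ) = conj α(φ)`, near `φ = 0` the function equals `G(φ) = (α(φ) / α(-φ))^s`, and
`G(φ) G(-φ) = 1`. Differentiating this identity twice at `0`, where `G(0) = 1`, forces
`G''(0) = G'(0)²`, so only the first derivative `G'(0) = 2 s α'(0) / α(0) = -i s cos θ`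
has to be computed.
-/

/-- `α(φ,θ) = cos²(θ/2)·e^{−iφ/2} + sin²(θ/2)·e^{iφ/2}`. -/
noncomputable def alphaFun (θ φ : ℝ) : ℂ :=
  (Real.cos (θ / 2) : ℂ) ^ 2 * Complex.exp (-Complex.I * φ / 2) +
    (Real.sin (θ / 2) : ℂ) ^ 2 * Complex.exp (Complex.I * φ / 2)

open Filter Topology

section Reflection

variable {𝕜 𝕝 : Type*} [NontriviallyNormedField 𝕜]

theorem mul_iteratedDeriv_two_eq_sq_deriv_of_mul_comp_neg_eq_one [NormedField 𝕝]
    [NormedAlgebra 𝕜 𝕝] [CharZero 𝕝] {F : 𝕜 → 𝕝} (hF : ContDiffAt 𝕜 2 F 0)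
    (h : ∀ᶠ x in 𝓝 0, F x * F (-x) = 1) :
    F 0 * iteratedDeriv 2 F 0 = deriv F 0 ^ 2 := by
  have hFneg : ContDiffAt 𝕜 2 (fun x => F (-x)) 0 :=
    ContDiffAt.comp (0 : 𝕜) (by simpa using hF) contDiff_neg.contDiffAt
  have hleibniz := iteratedDeriv_fun_mul hF hFneg
  rw [Filter.EventuallyEq.iteratedDeriv_eq 2 (g := fun _ => 1) h] at hleibniz
  simp only [iteratedDeriv_const, OfNat.ofNat_ne_zero, ↓reduceIte, Nat.reduceAdd,
    iteratedDeriv_comp_neg, neg_zero, Algebra.mul_smul_comm, Finset.sum_range_succ,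
    Finset.range_one, Finset.sum_singleton, tsub_zero, even_two, Even.neg_pow, one_pow,
    Nat.choose_zero_right, Nat.cast_one, iteratedDeriv_zero, one_mul, one_smul,
    Nat.add_one_sub_one, pow_one, Nat.choose_succ_self_right, Nat.cast_ofNat, iteratedDeriv_one,
    neg_smul, tsub_self, pow_zero, Nat.choose_self] at hleibniz
  linear_combination (-1 / 2 : 𝕝) * hleibniz

variable [NontriviallyNormedField 𝕝] [NormedAlgebra 𝕜 𝕝]

theorem hasDerivAt_div_comp_neg_zpow {u : 𝕜 → 𝕝} {u' : 𝕝} (hu : HasDerivAt u u' 0)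
    (hu0 : u 0 ≠ 0) (s : ℤ) :
    HasDerivAt (fun x => (u x / u (-x)) ^ s) (2 * s * (u' / u 0)) 0 := by
  have hneg : HasDerivAt (fun x => u (-x)) (-u') 0 := by
    have h := hu.scomp_of_eq (0 : 𝕜) (hasDerivAt_neg 0) neg_zero.symm
    rwa [neg_one_smul] at h
  have hratio := hu.fun_div hneg (by simpa using hu0)
  have hpow := (hasDerivAt_zpow s _ (Or.inl one_ne_zero)).comp_of_eq (0 : 𝕜) hratio
    (by simp [hu0])
  refine hpow.congr_deriv ?_
  rw [neg_zero, one_zpow]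
  field_simp
  ring

variable [CompleteSpace 𝕝]

theorem ContDiffAt.div_comp_neg_zpow {n : WithTop ℕ∞} {u : 𝕜 → 𝕝}
    (hu : ContDiffAt 𝕜 n u 0) (hu0 : u 0 ≠ 0) (s : ℤ) :
    ContDiffAt 𝕜 n (fun x => (u x / u (-x)) ^ s) 0 := by
  have hneg : ContDiffAt 𝕜 n (fun x => u (-x)) 0 :=
    ContDiffAt.comp (0 : 𝕜) (by simpa using hu) contDiff_neg.contDiffAt
  have hratio : ContDiffAt 𝕜 n (fun x => u x / u (-x)) 0 := by
    simpa only [div_eq_mul_inv] using hu.mul (hneg.fun_inv (by simpa using hu0))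
  have hzpow : ContDiffAt 𝕜 n (fun z : 𝕝 => z ^ s) (u 0 / u (-0)) :=
    ((analyticAt_id (𝕜 := 𝕝)).zpow (by simpa using hu0)).contDiffAt.restrict_scalars 𝕜
  exact hzpow.comp (0 : 𝕜) hratio

theorem iteratedDeriv_two_div_comp_neg_zpow [CharZero 𝕝] {u : 𝕜 → 𝕝}
    (hu : ContDiffAt 𝕜 2 u 0) (hu0 : u 0 ≠ 0) (s : ℤ) :
    iteratedDeriv 2 (fun x => (u x / u (-x)) ^ s) 0 =
      deriv (fun x => (u x / u (-x)) ^ s) 0 ^ 2 := by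
  have hne : ∀ᶠ x in 𝓝 0, u x ≠ 0 := hu.continuousAt.eventually_ne hu0
  have hne_neg : ∀ᶠ x in 𝓝 (0 : 𝕜), u (-x) ≠ 0 :=
    (continuous_neg.tendsto' 0 0 neg_zero).eventually hne
  have hrefl : ∀ᶠ x in 𝓝 (0 : 𝕜),
      (u x / u (-x)) ^ s * (u (-x) / u (-(-x))) ^ s = 1 := by
    filter_upwards [hne, hne_neg] with x hx hx_neg
    rw [neg_neg, ← mul_zpow, div_mul_div_cancel₀ hx_neg, div_self hx, one_zpow]
  simpa [hu0] using
    mul_iteratedDeriv_two_eq_sq_deriv_of_mul_comp_neg_eq_one (hu.div_comp_neg_zpow hu0 s) hrefl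

end Reflection

theorem Complex.sq_div_norm_sq_eq_div_conj {z : ℂ} (hz : z ≠ 0) :
    z ^ 2 / (‖z‖ : ℂ) ^ 2 = z / starRingEnd ℂ z := by
  have hz' : starRingEnd ℂ z ≠ 0 := by simpa using hz
  rw [← Complex.mul_conj']
  field_simp

theorem conj_alphaFun (θ φ : ℝ) : starRingEnd ℂ (alphaFun θ φ) = alphaFun θ (-φ) := by
  simp only [alphaFun, map_add, map_mul, map_pow, Complex.conj_ofReal, ← Complex.exp_conj,
    map_div₀, map_neg, map_ofNat, Complex.conj_I, Complex.ofReal_neg]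
  ring_nf

theorem alphaFun_zero (θ : ℝ) : alphaFun θ 0 = 1 := by
  simp only [alphaFun, Complex.ofReal_zero, mul_zero, zero_div, Complex.exp_zero, mul_one]
  exact_mod_cast Real.cos_sq_add_sin_sq (θ / 2)

theorem contDiff_alphaFun (θ : ℝ) {n : WithTop ℕ∞} : ContDiff ℝ n (alphaFun θ) := by
  have hofReal : ContDiff ℝ n ((↑) : ℝ → ℂ) := Complex.ofRealCLM.contDiff
  unfold alphaFun
  fun_prop

theorem hasDerivAt_alphaFun_zero (θ : ℝ) :
    HasDerivAt (alphaFun θ) (-Complex.I * Real.cos θ / 2) 0 := by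
  have hexp (w : ℂ) : HasDerivAt (fun φ : ℝ => Complex.exp (w * φ / 2)) (w / 2) 0 := by
    simpa using (((hasDerivAt_id (0 : ℝ)).ofReal_comp.const_mul w).div_const 2).cexp
  have h := ((hexp (-Complex.I)).const_mul ((Real.cos (θ / 2) : ℂ) ^ 2)).add
    ((hexp Complex.I).const_mul ((Real.sin (θ / 2) : ℂ) ^ 2))
  refine h.congr_deriv ?_
  rw [show θ = 2 * (θ / 2) by ring, Real.cos_two_mul', show 2 * (θ / 2) / 2 = θ / 2 by ring]
  push_cast
  ring

/-- for `s ∈ ℤ`, the function `φ ↦ (α(φ,θ)²/|α(φ,θ)|²)^s` has first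
derivative `−is·cos θ` at `φ = 0` and second derivative `−s²·cos²θ` at `φ = 0`. -/
theorem stmt15 (θ : ℝ) (s : ℤ) :
    deriv (fun φ : ℝ => (alphaFun θ φ ^ 2 / ((‖alphaFun θ φ‖ : ℂ)) ^ 2) ^ s) 0
        = -Complex.I * (s : ℂ) * (Real.cos θ : ℂ) ∧
    iteratedDeriv 2
        (fun φ : ℝ => (alphaFun θ φ ^ 2 / ((‖alphaFun θ φ‖ : ℂ)) ^ 2) ^ s) 0
        = -(s : ℂ) ^ 2 * (Real.cos θ : ℂ) ^ 2 := by
  have hα := hasDerivAt_alphaFun_zero θ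
  have hα0 : alphaFun θ 0 ≠ 0 := by simp [alphaFun_zero]
  have hF : (fun φ : ℝ => (alphaFun θ φ ^ 2 / ((‖alphaFun θ φ‖ : ℂ)) ^ 2) ^ s)
      =ᶠ[𝓝 0] fun φ => (alphaFun θ φ / alphaFun θ (-φ)) ^ s := by
    filter_upwards [hα.continuousAt.eventually_ne hα0] with φ hφ
    rw [Complex.sq_div_norm_sq_eq_div_conj hφ, conj_alphaFun]
  have hG' := (hasDerivAt_div_comp_neg_zpow hα hα0 s).deriv
  rw [hF.deriv_eq, hF.iteratedDeriv_eq,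
    iteratedDeriv_two_div_comp_neg_zpow (contDiff_alphaFun θ).contDiffAt hα0, hG',
    alphaFun_zero]
  constructor
  · ring
  · linear_combination (s : ℂ) ^ 2 * (Real.cos θ : ℂ) ^ 2 * Complex.I_sq
end
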